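/- Let (θ_n)_{n≥0} be an inexact BCD-PR output satisfying Assumptions (A1)–(A3). Then Σ_{n=1}^∞ (τ_n^−/2) ‖θ_n − θ_{n−1}‖² ≤ f(θ_0) + m Σ_{n=1}^∞ Δ_n < ∞, where τ_n^− := min_{1≤i≤m} τ_n^(i). -/

import Mathlib

/-!
Pass from `θ_{n-1}` to `θ_n` through the chain of points that switch the blocks from `θ_{n-1}`
to `θ_n` one at a time. Since `θ_{n-1}^{(i)}` is a feasible candidate for the `i`-th subproblem,
`Δ_n`-optimality of `θ_n^{(i)}` says that step `i` of the chain lowers `f` by at least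
`(τ_n^{(i)}/2)‖θ_n^{(i)} - θ_{n-1}^{(i)}‖² - Δ_n`. Summing over the blocks telescopes to
`(τ_n⁻/2)‖θ_n - θ_{n-1}‖² ≤ f(θ_{n-1}) - f(θ_n) + m Δ_n`, and summing over `n` telescopes again,
with `f ≥ 0` discarding the last value.
-/

noncomputable section

open scoped RealInnerProductSpace

namespace BCD4

/-- The `i`-th block space `ℝ^{I_i}`. -/
abbrev Blk {m : ℕ} (I : Fin m → ℕ) (i : Fin m) : Type := EuclideanSpace ℝ (Fin (I i))

/-- The full parameter space `ℝ^{I_1 + ⋯ + I_m}`, as an ℓ²-product of the blocks. -/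
abbrev Full {m : ℕ} (I : Fin m → ℕ) : Type := PiLp 2 (fun i : Fin m => EuclideanSpace ℝ (Fin (I i)))

/-- The point whose blocks `j < i` come from `a`, block `i` is `x`, and blocks `j > i`
come from `b`. -/
def mixUpd {m : ℕ} {I : Fin m → ℕ} (a b : Full I) (i : Fin m) (x : Blk I i) : Full I :=
  WithLp.toLp 2 (Function.update (fun j => if j < i then a j else b j) i x)

/-- The marginal loss `f_n^{(i)}(x) = f(θ_n^{(1)},…,θ_n^{(i-1)}, x, θ_{n-1}^{(i+1)},…)`. -/
def fb {m : ℕ} {I : Fin m → ℕ} (f : Full I → ℝ) (θ : ℕ → Full I) (n : ℕ) (i : Fin m)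
    (x : Blk I i) : ℝ :=
  f (mixUpd (θ n) (θ (n - 1)) i x)

/-- The proximally regularized marginal loss
`g_n^{(i)}(x) = f_n^{(i)}(x) + (τ_n^{(i)}/2)‖x - θ_{n-1}^{(i)}‖²`. -/
def gb {m : ℕ} {I : Fin m → ℕ} (f : Full I → ℝ) (θ : ℕ → Full I) (τ : ℕ → Fin m → ℝ)
    (n : ℕ) (i : Fin m) (x : Blk I i) : ℝ :=
  fb f θ n i x + τ n i / 2 * ‖x - θ (n - 1) i‖ ^ 2

/-- The optimality gap `Δ_n = max_i ( g_n^{(i)}(θ_n^{(i)}) - inf_{Θ^{(i)}} g_n^{(i)} )`. -/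
def gap {m : ℕ} {I : Fin m → ℕ} (f : Full I → ℝ) (θ : ℕ → Full I)
    (S : ∀ i : Fin m, Set (Blk I i)) (τ : ℕ → Fin m → ℝ) (n : ℕ) : ℝ :=
  ⨆ i, (gb f θ τ n i (θ n i) - sInf (gb f θ τ n i '' S i))

theorem summable_and_tsum_le_of_le_sub_add {a b F : ℕ → ℝ} {c : ℝ} (ha : ∀ n, 0 ≤ a n)
    (hb : ∀ n, 0 ≤ b n) (hbs : Summable b) (hF : ∀ n, 0 ≤ F n) (hc : 0 ≤ c)
    (h : ∀ n, a n ≤ F n - F (n + 1) + c * b n) :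
    Summable a ∧ ∑' n, a n ≤ F 0 + c * ∑' n, b n := by
  have partial_sum_le : ∀ N, ∑ n ∈ Finset.range N, a n ≤ F 0 + c * ∑' n, b n := fun N =>
    calc ∑ n ∈ Finset.range N, a n
        ≤ ∑ n ∈ Finset.range N, (F n - F (n + 1) + c * b n) := Finset.sum_le_sum fun n _ => h n
      _ = F 0 - F N + c * ∑ n ∈ Finset.range N, b n := by
        rw [Finset.sum_add_distrib, Finset.sum_range_sub', Finset.mul_sum]
      _ ≤ F 0 + c * ∑' n, b n := by
        gcongr
        · linarith [hF N]
        · exact hbs.sum_le_tsum _ fun n _ => hb n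
  exact ⟨summable_of_sum_range_le ha partial_sum_le, Real.tsum_le_of_sum_range_le ha partial_sum_le⟩

theorem PiLp.iInf_mul_norm_sq_le {ι : Type*} [Fintype ι] {β : ι → Type*}
    [∀ i, SeminormedAddCommGroup (β i)] (c : ι → ℝ) (x : PiLp 2 β) :
    (⨅ i, c i) * ‖x‖ ^ 2 ≤ ∑ i, c i * ‖x i‖ ^ 2 := by
  rw [PiLp.norm_sq_eq_of_L2, Finset.mul_sum]
  exact Finset.sum_le_sum fun i _ =>
    mul_le_mul_of_nonneg_right (ciInf_le (Finite.bddBelow_range c) i) (sq_nonneg _)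

section BlockChain

variable {m : ℕ} {I : Fin m → ℕ}

def blockChain (a b : Full I) (k : ℕ) : Full I :=
  WithLp.toLp 2 fun j => if (j : ℕ) < k then a j else b j

variable (a b : Full I)

theorem blockChain_zero : blockChain a b 0 = b := by
  ext j : 1
  simp [blockChain]

theorem blockChain_length : blockChain a b m = a := by
  ext j : 1
  simp [blockChain]

theorem mixUpd_apply_left (i : Fin m) : mixUpd a b i (a i) = blockChain a b (i + 1) := by
  ext j : 1
  rcases eq_or_ne j i with rfl | hji
  · simp [mixUpd, blockChain]
  · have : j < i ↔ (j : ℕ) < i + 1 := by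
      rw [Fin.lt_def, Nat.lt_succ_iff_lt_or_eq, or_iff_left (Fin.val_ne_of_ne hji)]
    simp [mixUpd, blockChain, Function.update_of_ne hji, this]

theorem mixUpd_apply_right (i : Fin m) : mixUpd a b i (b i) = blockChain a b i := by
  ext j : 1
  rcases eq_or_ne j i with rfl | hji
  · simp [mixUpd, blockChain]
  · simp [mixUpd, blockChain, Function.update_of_ne hji]

theorem sum_sub_blockChain (F : Full I → ℝ) :
    ∑ i : Fin m, (F (blockChain a b i) - F (blockChain a b (i + 1))) = F b - F a := by
  rw [Fin.sum_univ_eq_sum_range (fun k => F (blockChain a b k) - F (blockChain a b (k + 1))),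
    Finset.sum_range_sub', blockChain_zero, blockChain_length]

end BlockChain

section Descent

variable {m : ℕ} {I : Fin m → ℕ} {S : ∀ i : Fin m, Set (Blk I i)} {f : Full I → ℝ}
  {τ : ℕ → Fin m → ℝ} {θ : ℕ → Full I}

theorem gb_nonneg (hf0 : ∀ x, 0 ≤ f x) {n : ℕ} {i : Fin m} (hτ : 0 ≤ τ n i) (x : Blk I i) :
    0 ≤ gb f θ τ n i x :=
  add_nonneg (hf0 _) (by positivity)

theorem bddBelow_image_gb (hf0 : ∀ x, 0 ≤ f x) {n : ℕ} {i : Fin m} (hτ : 0 ≤ τ n i) :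
    BddBelow (gb f θ τ n i '' S i) :=
  ⟨0, Set.forall_mem_image.2 fun x _ => gb_nonneg hf0 hτ x⟩

theorem gb_le_sInf_add_gap (n : ℕ) (i : Fin m) :
    gb f θ τ n i (θ n i) ≤ sInf (gb f θ τ n i '' S i) + gap f θ S τ n := by
  have := le_ciSup (Finite.bddAbove_range
    fun j => gb f θ τ n j (θ n j) - sInf (gb f θ τ n j '' S j)) i
  rw [gap]
  linarith

theorem gap_nonneg (hf0 : ∀ x, 0 ≤ f x) {n : ℕ} (hτ : ∀ i, 0 ≤ τ n i)
    (hθ : ∀ i, θ n i ∈ S i) : 0 ≤ gap f θ S τ n :=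
  Real.iSup_nonneg fun i =>
    sub_nonneg.2 (csInf_le (bddBelow_image_gb hf0 (hτ i)) ⟨θ n i, hθ i, rfl⟩)

theorem gb_succ_apply_succ (n : ℕ) (i : Fin m) :
    gb f θ τ (n + 1) i (θ (n + 1) i) = f (blockChain (θ (n + 1)) (θ n) (i + 1)) +
      τ (n + 1) i / 2 * ‖θ (n + 1) i - θ n i‖ ^ 2 := by
  rw [gb, fb, Nat.add_sub_cancel, mixUpd_apply_left]

theorem gb_succ_apply_self (n : ℕ) (i : Fin m) :
    gb f θ τ (n + 1) i (θ n i) = f (blockChain (θ (n + 1)) (θ n) i) := by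
  rw [gb, fb, Nat.add_sub_cancel, mixUpd_apply_right, sub_self, norm_zero]
  ring

theorem blockwise_descent (hf0 : ∀ x, 0 ≤ f x) {n : ℕ} {i : Fin m} (hτ : 0 ≤ τ (n + 1) i)
    (hθ : θ n i ∈ S i) :
    τ (n + 1) i / 2 * ‖θ (n + 1) i - θ n i‖ ^ 2 ≤ f (blockChain (θ (n + 1)) (θ n) i) -
      f (blockChain (θ (n + 1)) (θ n) (i + 1)) + gap f θ S τ (n + 1) := by
  have near_optimal := gb_le_sInf_add_gap (f := f) (θ := θ) (τ := τ) (S := S) (n + 1) i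
  have previous_feasible : sInf (gb f θ τ (n + 1) i '' S i) ≤ gb f θ τ (n + 1) i (θ n i) :=
    csInf_le (bddBelow_image_gb hf0 hτ) ⟨θ n i, hθ, rfl⟩
  rw [gb_succ_apply_succ] at near_optimal
  rw [gb_succ_apply_self] at previous_feasible
  linarith

theorem iInf_div_two_mul_norm_sub_sq_le (hf0 : ∀ x, 0 ≤ f x) {n : ℕ}
    (hτ : ∀ i, 0 ≤ τ (n + 1) i) (hθ : ∀ i, θ n i ∈ S i) :
    (⨅ i, τ (n + 1) i) / 2 * ‖θ (n + 1) - θ n‖ ^ 2 ≤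
      f (θ n) - f (θ (n + 1)) + m * gap f θ S τ (n + 1) :=
  calc (⨅ i, τ (n + 1) i) / 2 * ‖θ (n + 1) - θ n‖ ^ 2
      ≤ (∑ i, τ (n + 1) i * ‖θ (n + 1) i - θ n i‖ ^ 2) / 2 := by
        rw [div_mul_eq_mul_div]
        gcongr
        exact PiLp.iInf_mul_norm_sq_le _ (θ (n + 1) - θ n)
    _ = ∑ i, τ (n + 1) i / 2 * ‖θ (n + 1) i - θ n i‖ ^ 2 := by
        rw [Finset.sum_div]
        simp only [div_mul_eq_mul_div]
    _ ≤ ∑ i : Fin m, (f (blockChain (θ (n + 1)) (θ n) i) -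
          f (blockChain (θ (n + 1)) (θ n) (i + 1)) + gap f θ S τ (n + 1)) :=
        Finset.sum_le_sum fun i _ => blockwise_descent hf0 (hτ i) (hθ i)
    _ = f (θ n) - f (θ (n + 1)) + m * gap f θ S τ (n + 1) := by
        rw [Finset.sum_add_distrib, sum_sub_blockChain, Finset.sum_const, Finset.card_univ,
          Fintype.card_fin, nsmul_eq_mul]

end Descent

theorem stmt4_general {m : ℕ} {I : Fin m → ℕ}
    (S : ∀ i : Fin m, Set (Blk I i))
    (f : Full I → ℝ) (hf0 : ∀ x, 0 ≤ f x)
    (τ : ℕ → Fin m → ℝ) (hτ : ∀ n i, 0 < τ n i)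
    (θ : ℕ → Full I) (hθ : ∀ n i, θ n i ∈ S i)
    -- (A3): summable optimality gaps
    (hA3 : Summable (fun n : ℕ => gap f θ S τ (n + 1))) :
    Summable (fun n : ℕ => (⨅ i, τ (n + 1) i) / 2 * ‖θ (n + 1) - θ n‖ ^ 2) ∧
      (∑' n : ℕ, (⨅ i, τ (n + 1) i) / 2 * ‖θ (n + 1) - θ n‖ ^ 2) ≤
        f (θ 0) + m * ∑' n : ℕ, gap f θ S τ (n + 1) := by
  have hτ0 : ∀ n i, 0 ≤ τ n i := fun n i => (hτ n i).le
  refine summable_and_tsum_le_of_le_sub_add (fun n => ?_)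
    (fun n => gap_nonneg hf0 (hτ0 (n + 1)) (hθ (n + 1))) hA3 (fun n => hf0 (θ n))
    (Nat.cast_nonneg m) (fun n => iInf_div_two_mul_norm_sub_sq_le hf0 (hτ0 (n + 1)) (hθ n))
  have := Real.iInf_nonneg (hτ0 (n + 1))
  positivity

/-- **Square-summability of increments.**
`Σ_{n≥1} (τ_n⁻/2) ‖θ_n - θ_{n-1}‖² ≤ f(θ_0) + m Σ_{n≥1} Δ_n < ∞`. -/
theorem stmt4 {m : ℕ} (hm : 0 < m) {I : Fin m → ℕ}
    (S : ∀ i : Fin m, Set (Blk I i))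
    (hSne : ∀ i, (S i).Nonempty) (hSconv : ∀ i, Convex ℝ (S i))
    (f : Full I → ℝ) (hf : ContDiff ℝ 1 f) (hf0 : ∀ x, 0 ≤ f x)
    (L : Fin m → ℝ) (hL : ∀ i, 0 < L i)
    -- (A1): block-wise Lipschitz gradient
    (hA1 : ∀ (i : Fin m) (b : Full I), (∀ j, b j ∈ S j) →
      LipschitzOnWith (Real.toNNReal (L i))
        (fun x : Blk I i => gradient f (WithLp.toLp 2 (Function.update b i x))) (S i))
    -- (A2): compact sublevel sets
    (hA2 : ∀ a : ℝ, IsCompact {x : Full I | (∀ i, x i ∈ S i) ∧ f x ≤ a})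
    (τ : ℕ → Fin m → ℝ) (hτ : ∀ n i, 0 < τ n i)
    (θ : ℕ → Full I) (hθ : ∀ n i, θ n i ∈ S i)
    -- (A3): summable optimality gaps
    (hA3 : Summable (fun n : ℕ => gap f θ S τ (n + 1))) :
    Summable (fun n : ℕ => (⨅ i, τ (n + 1) i) / 2 * ‖θ (n + 1) - θ n‖ ^ 2) ∧
      (∑' n : ℕ, (⨅ i, τ (n + 1) i) / 2 * ‖θ (n + 1) - θ n‖ ^ 2) ≤
        f (θ 0) + m * ∑' n : ℕ, gap f θ S τ (n + 1) :=
  stmt4_general S f hf0 τ hτ θ hθ hA3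

end BCD4
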